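/- Let Ω and Θ be finite sets with |Θ| ≥ 3, and let {g_ω}_{ω∈Ω} be a Blackwell distortion function, i.e. a family of maps g_ω : Δ(Θ) → Δ(Θ), each positive and continuous. Then {g_ω} is Blackwell signal coherent if and only if for each ω ∈ Ω there exist ψ_ω : Θ → ℝ₊₊ and α_ω > 0 such that for every σ ∈ Δ(Θ) and θ ∈ Θ, g_ω(σ)(θ) = ψ_ω(θ)·σ(θ)^{α_ω} / Σ_{θ'∈Θ} ψ_ω(θ')·σ(θ')^{α_ω}. -/

import Mathlib

open Finset

/-- `σ` is a probability distribution on the finite set `Θ`. -/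
def IsDist {Θ : Type*} [Fintype Θ] (σ : Θ → ℝ) : Prop :=
  (∀ θ, 0 ≤ σ θ) ∧ ∑ θ, σ θ = 1

/-- The conditional distribution `σ(·|S)` of `σ` given the set of signals `S`. -/
noncomputable def condOn {Θ : Type*} [Fintype Θ] [DecidableEq Θ]
    (σ : Θ → ℝ) (S : Finset Θ) : Θ → ℝ :=
  fun θ => if θ ∈ S then σ θ / ∑ θ' ∈ S, σ θ' else 0

/-- A map `g : Δ(Θ) → Δ(Θ)` is positive if `g(σ)(S) = 0` iff `σ(S) = 0`. -/
def PositiveBelief {Θ : Type*} [Fintype Θ] (g : (Θ → ℝ) → Θ → ℝ) : Prop :=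
  ∀ σ, IsDist σ → ∀ S : Finset Θ, (∑ θ ∈ S, g σ θ = 0 ↔ ∑ θ ∈ S, σ θ = 0)

/-- A family `{g_ω}` is Blackwell signal coherent: for every state `ω`, every
`σ ∈ Δ(Θ)` and every `S ⊆ Θ` with `σ(S) > 0`, `g_ω(σ(·|S)) = g_ω(σ)(·|S)`. -/
def BlackwellSignalCoherent {Ω Θ : Type*} [Fintype Θ] [DecidableEq Θ]
    (g : Ω → (Θ → ℝ) → Θ → ℝ) : Prop :=
  ∀ ω : Ω, ∀ σ : Θ → ℝ, IsDist σ → ∀ S : Finset Θ, 0 < ∑ θ ∈ S, σ θ →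
    g ω (condOn σ S) = condOn (g ω σ) S



open Real in
lemma cauchy_pow (F : ℝ → ℝ) (hc : ContinuousOn F (Set.Ioi 0))
    (hpos : ∀ x, 0 < x → 0 < F x)
    (hmul : ∀ x, 0 < x → ∀ y, 0 < y → F (x * y) = F x * F y) :
    ∃ α : ℝ, ∀ x, 0 < x → F x = x ^ α := by
  have hF1 : F 1 = 1 := by
    have := hmul 1 one_pos 1 one_pos
    rw [one_mul] at this
    have h1 := hpos 1 one_pos
    nlinarith
  have hFe : Continuous fun s => F (Real.exp s) :=
    hc.comp_continuous Real.continuous_exp fun s => Set.mem_Ioi.2 (Real.exp_pos s)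
  set f : ℝ → ℝ := fun s => Real.log (F (Real.exp s)) with hf
  have hadd : ∀ s t, f (s + t) = f s + f t := by
    intro s t
    simp only [hf, Real.exp_add]
    rw [hmul _ (Real.exp_pos s) _ (Real.exp_pos t),
      Real.log_mul (hpos _ (Real.exp_pos s)).ne' (hpos _ (Real.exp_pos t)).ne']
  have hfc : Continuous f := by
    rw [continuous_iff_continuousAt]
    intro s
    exact ContinuousAt.comp (f := fun s => F (Real.exp s))
      (Real.continuousAt_log (hpos _ (Real.exp_pos s)).ne') hFe.continuousAt
  have hf0 : f 0 = 0 := by simp [hf, Real.exp_zero, hF1]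
  let fh : ℝ →+ ℝ := AddMonoidHom.mk' f (fun a b => hadd a b)
  have hlin : ∀ s : ℝ, f s = f 1 * s := by
    intro s
    have := (fh.toRealLinearMap hfc).map_smul s 1
    have hfx : ∀ x, (fh.toRealLinearMap hfc) x = f x := fun x => rfl
    simpa [hfx, smul_eq_mul, mul_comm] using this
  refine ⟨f 1, fun x hx => ?_⟩
  have : f (Real.log x) = Real.log (F x) := by simp [hf, Real.exp_log hx]
  rw [hlin (Real.log x)] at this
  rw [Real.rpow_def_of_pos hx, mul_comm, this, Real.exp_log (hpos x hx)]


set_option linter.unusedSectionVars false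
set_option linter.unusedTactic false
set_option linter.unreachableTactic false
set_option linter.deprecated false

section Core
variable {Θ : Type*} [Fintype Θ] [DecidableEq Θ]

/-- the two-point distribution -/
def Dd (a b : Θ) (t : ℝ) : Θ → ℝ :=
  fun θ => if θ = a then t else if θ = b then 1 - t else 0

lemma Dd_eq_add {a b : Θ} (hab : a ≠ b) (t : ℝ) :
    Dd a b t = fun θ => (if θ = a then t else 0) + (if θ = b then 1 - t else 0) := by
  funext θ
  unfold Dd
  split_ifs with h1 h2 <;> simp_all <;> ring

lemma isDist_Dd {a b : Θ} (hab : a ≠ b) {t : ℝ} (h0 : 0 ≤ t) (h1 : t ≤ 1) :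
    IsDist (Dd a b t) := by
  constructor
  · intro θ; unfold Dd; split_ifs <;> linarith
  · rw [Dd_eq_add hab]
    rw [Finset.sum_add_distrib, Finset.sum_ite_eq' univ a (fun _ => t),
      Finset.sum_ite_eq' univ b (fun _ => 1 - t)]
    simp

lemma Dd_pos {a b : Θ} (hab : a ≠ b) {t : ℝ} (h0 : 0 < t) (h1 : t < 1) :
    0 < Dd a b t a ∧ 0 < Dd a b t b := by
  constructor <;> unfold Dd <;> simp [hab, hab.symm] <;> linarith

variable (g : (Θ → ℝ) → Θ → ℝ)

/-- distorted odds ratio -/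
noncomputable def Rr (a b : Θ) (x : ℝ) : ℝ :=
  g (Dd a b (x / (1 + x))) a / g (Dd a b (x / (1 + x))) b

variable {g}
variable (hmapg : ∀ σ, IsDist σ → IsDist (g σ)) (hposg : PositiveBelief g)

section Basic
include hmapg hposg

lemma g_pos {σ : Θ → ℝ} (hσ : IsDist σ) {θ : Θ} (h : 0 < σ θ) : 0 < g σ θ := by
  have h0 := (hmapg σ hσ).1 θ
  rcases h0.lt_or_eq with h' | h'
  · exact h'
  · exfalso
    have := (hposg σ hσ {θ}).1 (by simp [← h'])
    simp at this; linarith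

lemma g_zero {σ : Θ → ℝ} (hσ : IsDist σ) {θ : Θ} (h : σ θ = 0) : g σ θ = 0 := by
  have := (hposg σ hσ {θ}).2 (by simp [h])
  simpa using this

end Basic

lemma tfrac_pos {x : ℝ} (hx : 0 < x) : 0 < x / (1 + x) := by positivity

lemma tfrac_lt_one {x : ℝ} (hx : 0 < x) : x / (1 + x) < 1 := by
  rw [div_lt_one (by linarith)]; linarith

include hmapg hposg in
lemma Rr_pos {a b : Θ} (hab : a ≠ b) {x : ℝ} (hx : 0 < x) : 0 < Rr g a b x := by
  have hd := isDist_Dd hab (le_of_lt (tfrac_pos hx)) (le_of_lt (tfrac_lt_one hx))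
  have hp := Dd_pos hab (tfrac_pos hx) (tfrac_lt_one hx)
  exact div_pos (g_pos hmapg hposg hd hp.1) (g_pos hmapg hposg hd hp.2)

end Core


section Core2
set_option linter.unusedSectionVars false
variable {Θ : Type*} [Fintype Θ] [DecidableEq Θ]
variable {g : (Θ → ℝ) → Θ → ℝ}
variable (hmapg : ∀ σ, IsDist σ → IsDist (g σ)) (hposg : PositiveBelief g)
variable (hcohg : ∀ σ : Θ → ℝ, IsDist σ → ∀ S : Finset Θ, 0 < ∑ θ ∈ S, σ θ →
    g (condOn σ S) = condOn (g σ) S)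

lemma condOn_pair {σ : Θ → ℝ} {a b : Θ} (hab : a ≠ b) (hs : σ a + σ b ≠ 0) :
    condOn σ {a, b} = Dd a b (σ a / (σ a + σ b)) := by
  funext θ
  unfold condOn Dd
  rw [Finset.sum_pair hab]
  by_cases ha : θ = a
  · subst ha; simp
  · by_cases hb : θ = b
    · subst hb
      simp only [Finset.mem_insert, Finset.mem_singleton, ha, false_or, if_pos rfl,
        if_neg ha, if_pos rfl]
      simp only [↓reduceIte]
      rw [eq_sub_iff_add_eq, ← add_div, div_eq_one_iff_eq hs]; ring
    · simp [ha, hb]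

include hmapg hposg hcohg in
lemma ratio_eq {σ : Θ → ℝ} (hσ : IsDist σ) (hfull : ∀ θ, 0 < σ θ) {a b : Θ}
    (hab : a ≠ b) : g σ a / g σ b = Rr g a b (σ a / σ b) := by
  have hsab : (0:ℝ) < σ a + σ b := by have := hfull a; have := hfull b; linarith
  have hsum : 0 < ∑ θ ∈ ({a, b} : Finset Θ), σ θ := by
    rw [Finset.sum_pair hab]; exact hsab
  have hkey := hcohg σ hσ {a, b} hsum
  have hab2 : σ a / σ b / (1 + σ a / σ b) = σ a / (σ a + σ b) := by
    have hb := (hfull b).ne'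
    have h1 : (0:ℝ) < 1 + σ a / σ b := by
      have := div_pos (hfull a) (hfull b); linarith
    rw [div_eq_div_iff h1.ne' hsab.ne']
    field_simp
    ring
  have hga := g_pos hmapg hposg hσ (hfull a)
  have hgb := g_pos hmapg hposg hσ (hfull b)
  have hgs : (0:ℝ) < ∑ θ ∈ ({a, b} : Finset Θ), g σ θ := by
    rw [Finset.sum_pair hab]; linarith
  unfold Rr
  rw [hab2, ← condOn_pair hab hsab.ne', hkey]
  unfold condOn
  simp only [Finset.mem_insert, Finset.mem_singleton, true_or, or_true, if_true]
  have haux : ∀ x y s : ℝ, y ≠ 0 → s ≠ 0 → x/s/(y/s) = x/y := by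
    intro x y s hy hs; field_simp
  rw [haux _ _ _ hgb.ne' hgs.ne']

end Core2


section Core3
set_option linter.unusedSectionVars false
variable {Θ : Type*} [Fintype Θ] [DecidableEq Θ]
variable {g : (Θ → ℝ) → Θ → ℝ}
variable (hmapg : ∀ σ, IsDist σ → IsDist (g σ)) (hposg : PositiveBelief g)
variable (hcohg : ∀ σ : Θ → ℝ, IsDist σ → ∀ S : Finset Θ, 0 < ∑ θ ∈ S, σ θ →
    g (condOn σ S) = condOn (g σ) S)
variable (hcontg : ContinuousOn g {σ | IsDist σ})

include hmapg hposg hcohg in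
lemma Rr_cocycle {a b c : Θ} (hab : a ≠ b) (hbc : b ≠ c) (hac : a ≠ c)
    {x y : ℝ} (hx : 0 < x) (hy : 0 < y) :
    Rr g a c (x * y) = Rr g a b x * Rr g b c y := by
  haveI : Nonempty Θ := ⟨a⟩
  set v : Θ → ℝ := fun θ => if θ = a then x * y else if θ = b then y else 1 with hv
  have hvpos : ∀ θ, 0 < v θ := by
    intro θ; simp only [hv]; split_ifs <;> [positivity; exact hy; exact one_pos]
  set T : ℝ := ∑ θ, v θ with hT
  have hTpos : 0 < T := Finset.sum_pos (fun θ _ => hvpos θ) univ_nonempty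
  set σ : Θ → ℝ := fun θ => v θ / T with hσdef
  have hσ : IsDist σ := by
    constructor
    · intro θ; exact (div_pos (hvpos θ) hTpos).le
    · rw [hσdef, ← Finset.sum_div, ← hT, div_self hTpos.ne']
  have hfull : ∀ θ, 0 < σ θ := fun θ => div_pos (hvpos θ) hTpos
  have haux : ∀ p q : ℝ, q ≠ 0 → p/T/(q/T) = p/q := by
    intro p q hq; field_simp
  have hva : v a = x * y := by simp [hv]
  have hvb : v b = y := by simp [hv, hab.symm]
  have hvc : v c = 1 := by simp [hv, hac.symm, hbc.symm]
  have r1 : g σ a / g σ b = Rr g a b x := by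
    rw [ratio_eq hmapg hposg hcohg hσ hfull hab]
    congr 1
    rw [hσdef]; simp only []
    rw [haux _ _ (by rw [hvb]; exact hy.ne'), hva, hvb, mul_div_assoc,
      div_self hy.ne', mul_one]
  have r2 : g σ b / g σ c = Rr g b c y := by
    rw [ratio_eq hmapg hposg hcohg hσ hfull hbc]
    congr 1
    rw [hσdef]; simp only []
    rw [haux _ _ (by rw [hvc]; exact one_ne_zero), hvb, hvc, div_one]
  have r3 : g σ a / g σ c = Rr g a c (x * y) := by
    rw [ratio_eq hmapg hposg hcohg hσ hfull hac]
    congr 1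
    rw [hσdef]; simp only []
    rw [haux _ _ (by rw [hvc]; exact one_ne_zero), hva, hvc, div_one]
  rw [← r1, ← r2, ← r3]
  have hgb := (g_pos hmapg hposg hσ (hfull b)).ne'
  have hgc := (g_pos hmapg hposg hσ (hfull c)).ne'
  field_simp

include hmapg hposg hcontg in
lemma Rr_contOn {a b : Θ} (hab : a ≠ b) : ContinuousOn (Rr g a b) (Set.Ioi 0) := by
  have hfrac : ContinuousOn (fun x : ℝ => x / (1 + x)) (Set.Ioi 0) := by
    apply ContinuousOn.div continuousOn_id (by fun_prop)
    intro x hx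
    have : (0:ℝ) < x := hx
    intro h; linarith [h]
  have hDd : Continuous (fun t : ℝ => Dd a b t) := by
    apply continuous_pi
    intro θ
    unfold Dd
    split_ifs <;> fun_prop
  have hcomp : ContinuousOn (fun x : ℝ => g (Dd a b (x / (1 + x)))) (Set.Ioi 0) := by
    apply hcontg.comp ((hDd.comp_continuousOn hfrac))
    intro x hx
    exact isDist_Dd hab (tfrac_pos hx).le (tfrac_lt_one hx).le
  have ha : ContinuousOn (fun x : ℝ => g (Dd a b (x / (1 + x))) a) (Set.Ioi 0) :=
    (continuous_apply a).comp_continuousOn hcomp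
  have hb : ContinuousOn (fun x : ℝ => g (Dd a b (x / (1 + x))) b) (Set.Ioi 0) :=
    (continuous_apply b).comp_continuousOn hcomp
  exact ha.div hb (fun x hx => (g_pos hmapg hposg
    (isDist_Dd hab (tfrac_pos hx).le (tfrac_lt_one hx).le)
    (Dd_pos hab (tfrac_pos hx) (tfrac_lt_one hx)).2).ne')

include hmapg hposg hcohg hcontg in
lemma pair_pow {a b c : Θ} (hab : a ≠ b) (hbc : b ≠ c) (hac : a ≠ c) :
    ∃ α : ℝ, ∀ x, 0 < x → Rr g a c x = Rr g a c 1 * x ^ α := by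
  have h1 : 0 < Rr g a c 1 := Rr_pos hmapg hposg hac one_pos
  set F : ℝ → ℝ := fun x => Rr g a c x / Rr g a c 1 with hF
  have hmulR : ∀ x, 0 < x → ∀ y, 0 < y →
      Rr g a c (x * y) * Rr g a c 1 = Rr g a c x * Rr g a c y := by
    intro x hx y hy
    have e1 := Rr_cocycle hmapg hposg hcohg hab hbc hac hx hy
    have e2 := Rr_cocycle hmapg hposg hcohg hab hbc hac hx one_pos
    have e3 := Rr_cocycle hmapg hposg hcohg hab hbc hac one_pos hy
    have e4 := Rr_cocycle hmapg hposg hcohg hab hbc hac one_pos one_pos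
    rw [mul_one] at e2 e4
    rw [one_mul] at e3
    rw [e1, e2, e3, e4]
    ring
  obtain ⟨α, hα⟩ := cauchy_pow F
    ((Rr_contOn hmapg hposg hcontg hac).div continuousOn_const fun x _ => h1.ne')
    (fun x hx => div_pos (Rr_pos hmapg hposg hac hx) h1)
    (fun x hx y hy => by
      simp only [hF]
      rw [div_mul_div_comm, ← hmulR x hx y hy]
      field_simp)
  refine ⟨α, fun x hx => ?_⟩
  have := hα x hx
  simp only [hF] at this
  rw [div_eq_iff h1.ne'] at this
  rw [this]; ring

end Core3


section Core4
set_option linter.unusedSectionVars false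
variable {Θ : Type*} [Fintype Θ] [DecidableEq Θ]
variable {g : (Θ → ℝ) → Θ → ℝ}
variable (hmapg : ∀ σ, IsDist σ → IsDist (g σ)) (hposg : PositiveBelief g)
variable (hcohg : ∀ σ : Θ → ℝ, IsDist σ → ∀ S : Finset Θ, 0 < ∑ θ ∈ S, σ θ →
    g (condOn σ S) = condOn (g σ) S)
variable (hcontg : ContinuousOn g {σ | IsDist σ})

lemma exists_third (hΘ : 3 ≤ Fintype.card Θ) (a b : Θ) : ∃ c, c ≠ a ∧ c ≠ b := by
  by_contra h
  push_neg at h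
  have hsub : (univ : Finset Θ) ⊆ {a, b} := by
    intro c _
    rcases ne_or_eq c a with hca | hca
    · simp [h c hca]
    · simp [hca]
  have := Finset.card_le_card hsub
  have h2 : ({a, b} : Finset Θ).card ≤ 2 := Finset.card_insert_le a {b} |>.trans (by simp)
  rw [Finset.card_univ] at this
  omega

lemma rpow_exp_inj {α β : ℝ} (h : ∀ x : ℝ, 0 < x → x ^ α = x ^ β) : α = β := by
  have := h (Real.exp 1) (Real.exp_pos 1)
  rw [Real.exp_one_rpow, Real.exp_one_rpow] at this
  exact Real.exp_injective this

include hmapg hposg hcohg hcontg in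
lemma rep_full_exists (hΘ : 3 ≤ Fintype.card Θ) :
    ∃ (ψ : Θ → ℝ) (α : ℝ), (∀ θ, 0 < ψ θ) ∧
      ∀ σ, IsDist σ → (∀ θ, 0 < σ θ) → ∀ θ,
        g σ θ = ψ θ * σ θ ^ α / ∑ θ', ψ θ' * σ θ' ^ α := by
  haveI : Nonempty Θ := Fintype.card_pos_iff.mp (by omega)
  obtain ⟨a0, b0, hab0⟩ := Fintype.exists_pair_of_one_lt_card (α := Θ) (by omega)
  have hpair : ∀ a : Θ, a ≠ b0 → ∃ α : ℝ, ∀ x, 0 < x →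
      Rr g a b0 x = Rr g a b0 1 * x ^ α := by
    intro a ha
    obtain ⟨c, hca, hcb⟩ := exists_third hΘ a b0
    exact pair_pow hmapg hposg hcohg hcontg (Ne.symm hca) hcb ha
  obtain ⟨α, hα⟩ := hpair a0 hab0
  have hkey : ∀ a : Θ, a ≠ b0 → ∀ x, 0 < x →
      Rr g a b0 x = Rr g a b0 1 * x ^ α := by
    intro a ha
    rcases eq_or_ne a a0 with rfl | haa0
    · exact hα
    · obtain ⟨β, hβ⟩ := hpair a ha
      have heq : α = β := by
        apply rpow_exp_inj
        intro x hx
        have hco := Rr_cocycle hmapg hposg hcohg (Ne.symm haa0) ha hab0 one_pos hx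
        rw [one_mul] at hco
        have hco1 := Rr_cocycle hmapg hposg hcohg (Ne.symm haa0) ha hab0 one_pos one_pos
        rw [one_mul] at hco1
        have h1pos := Rr_pos hmapg hposg hab0 one_pos
        have hcomb : Rr g a0 b0 1 * x ^ α = Rr g a0 b0 1 * x ^ β := by
          rw [← hα x hx, hco, hβ x hx, hco1]; ring
        exact mul_left_cancel₀ h1pos.ne' hcomb
      intro x hx
      rw [hβ x hx, heq]
  -- define ψ
  refine ⟨fun θ => if θ = b0 then 1 else Rr g θ b0 1, α, fun θ => ?_, ?_⟩
  · by_cases h : θ = b0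
    · simp [h]
    · simpa [h] using Rr_pos hmapg hposg h one_pos
  · intro σ hσ hfull θ
    set ψ : Θ → ℝ := fun θ => if θ = b0 then 1 else Rr g θ b0 1 with hψ
    have hψpos : ∀ θ, 0 < ψ θ := by
      intro θ; simp only [hψ]
      split_ifs with h
      · exact one_pos
      · exact Rr_pos hmapg hposg h one_pos
    set C : ℝ := g σ b0 / σ b0 ^ α with hC
    have hCrep : ∀ θ, g σ θ = C * (ψ θ * σ θ ^ α) := by
      intro θ'
      have hbpow : (0:ℝ) < σ b0 ^ α := Real.rpow_pos_of_pos (hfull b0) α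
      rcases eq_or_ne θ' b0 with rfl | hne
      · simp only [hψ, if_pos rfl, if_true]
        rw [hC]
        field_simp
      · have hr := ratio_eq hmapg hposg hcohg hσ hfull hne
        rw [hkey θ' hne _ (div_pos (hfull θ') (hfull b0)),
          Real.div_rpow (hfull θ').le (hfull b0).le] at hr
        have hgb0 := g_pos hmapg hposg hσ (hfull b0)
        simp only [hψ]
        rw [if_neg hne, hC]
        rw [div_eq_iff hgb0.ne'] at hr
        rw [hr]
        field_simp
    have hZpos : 0 < ∑ θ', ψ θ' * σ θ' ^ α := by
      apply Finset.sum_pos ?_ univ_nonempty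
      intro θ' _
      exact mul_pos (hψpos θ') (Real.rpow_pos_of_pos (hfull θ') α)
    have hsum : C * (∑ θ', ψ θ' * σ θ' ^ α) = 1 := by
      rw [Finset.mul_sum]
      rw [← (hmapg σ hσ).2]
      exact Finset.sum_congr rfl fun θ' _ => (hCrep θ').symm
    have hCval : C = 1 / ∑ θ', ψ θ' * σ θ' ^ α := by
      field_simp at hsum ⊢
      linarith
    rw [hCrep θ, hCval]
    field_simp


end Core4

section Core5
set_option linter.unusedSectionVars false
variable {Θ : Type*} [Fintype Θ] [DecidableEq Θ]
variable {g : (Θ → ℝ) → Θ → ℝ}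
variable (hmapg : ∀ σ, IsDist σ → IsDist (g σ)) (hposg : PositiveBelief g)
variable (hcontg : ContinuousOn g {σ | IsDist σ})

lemma sum_ite_const [Nonempty Θ] (b0 : Θ) (p q : ℝ) :
    ∑ θ, (if θ = b0 then p else q) = p + ((Fintype.card Θ : ℝ) - 1) * q := by
  rw [← Finset.add_sum_erase _ _ (mem_univ b0), if_pos rfl]
  congr 1
  rw [Finset.sum_congr rfl (fun θ hθ => if_neg (Finset.ne_of_mem_erase hθ)),
    Finset.sum_const, Finset.card_erase_of_mem (mem_univ b0), Finset.card_univ,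
    nsmul_eq_mul]
  congr 1
  have h1 : 1 ≤ Fintype.card Θ := Fintype.card_pos
  push_cast [Nat.cast_sub h1]
  ring

include hmapg hposg hcontg in
lemma alpha_pos (hΘ : 3 ≤ Fintype.card Θ) {ψ : Θ → ℝ} {α : ℝ}
    (hψpos : ∀ θ, 0 < ψ θ)
    (hrep : ∀ σ, IsDist σ → (∀ θ, 0 < σ θ) → ∀ θ,
      g σ θ = ψ θ * σ θ ^ α / ∑ θ', ψ θ' * σ θ' ^ α) :
    0 < α := by
  by_contra hαpos
  push_neg at hαpos
  have hne : Nonempty Θ := Fintype.card_pos_iff.mp (by omega)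
  haveI := hne
  obtain ⟨b0⟩ := hne
  set m : ℝ := (Fintype.card Θ : ℝ) - 1 with hm
  have hmpos : 0 < m := by
    rw [hm]
    have : (3:ℝ) ≤ (Fintype.card Θ : ℝ) := by exact_mod_cast hΘ
    linarith
  set t : ℕ → ℝ := fun n => ((n : ℝ) + 2)⁻¹ with ht
  have ht0 : ∀ n, 0 < t n := by intro n; rw [ht]; positivity
  have ht2 : ∀ n, t n ≤ 1 / 2 := by
    intro n
    rw [ht]
    simp only []
    rw [inv_le_comm₀ (by positivity) (by norm_num)]
    push_cast
    linarith [Nat.cast_nonneg (α := ℝ) n]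
  have ht1 : ∀ n, t n < 1 := fun n => lt_of_le_of_lt (ht2 n) (by norm_num)
  set σ0 : Θ → ℝ := fun θ => if θ = b0 then 0 else m⁻¹ with hσ0
  set σn : ℕ → Θ → ℝ := fun n θ => if θ = b0 then t n else (1 - t n) * m⁻¹ with hσn
  have hσ0dist : IsDist σ0 := by
    constructor
    · intro θ; rw [hσ0]; dsimp only; split_ifs; · exact le_refl 0
      · positivity
    · rw [hσ0, sum_ite_const b0 0 m⁻¹, ← hm]
      field_simp
      ring
  have hσndist : ∀ n, IsDist (σn n) := by
    intro n
    constructor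
    · intro θ; rw [hσn]; dsimp only; split_ifs
      · exact (ht0 n).le
      · exact mul_nonneg (by linarith [ht1 n]) (by positivity)
    · rw [hσn]; dsimp only
      rw [sum_ite_const b0 (t n) ((1 - t n) * m⁻¹), ← hm]
      field_simp
      ring
  have hσnfull : ∀ n θ, 0 < σn n θ := by
    intro n θ; rw [hσn]; dsimp only; split_ifs
    · exact ht0 n
    · have := ht1 n
      apply mul_pos (by linarith) (by positivity)
  -- convergence
  have httend : Filter.Tendsto t Filter.atTop (nhds 0) := by
    rw [ht]
    have hb : Filter.Tendsto (fun n : ℕ => (n : ℝ) + 2) Filter.atTop Filter.atTop :=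
      Filter.tendsto_atTop_add_const_right _ _ tendsto_natCast_atTop_atTop
    exact hb.inv_tendsto_atTop
  have htend : Filter.Tendsto σn Filter.atTop (nhds σ0) := by
    rw [tendsto_pi_nhds]
    intro θ
    rw [hσn, hσ0]
    dsimp only
    split_ifs
    · exact httend
    · have : Filter.Tendsto (fun n => (1 - t n) * m⁻¹) Filter.atTop
          (nhds ((1 - 0) * m⁻¹)) :=
        Filter.Tendsto.mul (Filter.Tendsto.sub tendsto_const_nhds httend)
          tendsto_const_nhds
      simpa using this
  have hgtend : Filter.Tendsto (fun n => g (σn n) b0) Filter.atTop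
      (nhds (g σ0 b0)) := by
    have h1 : Filter.Tendsto σn Filter.atTop (nhdsWithin σ0 {σ | IsDist σ}) :=
      tendsto_nhdsWithin_of_tendsto_nhds_of_eventually_within _ htend
        (Filter.Eventually.of_forall (fun n => hσndist n))
    have h2 := (hcontg σ0 hσ0dist).tendsto.comp h1
    exact ((continuous_apply b0).tendsto _).comp h2
  have hg0 : g σ0 b0 = 0 := g_zero hmapg hposg hσ0dist (show σ0 b0 = 0 by rw [hσ0]; simp)
  -- lower bound
  set q : ℝ := (1/2 : ℝ) ^ α with hq
  have hqpos : 0 < q := Real.rpow_pos_of_pos (by norm_num) α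
  set K : ℝ := ∑ θ, ψ θ * ((1/2) * m⁻¹) ^ α with hK
  have hKpos : 0 < K := by
    rw [hK]
    apply Finset.sum_pos ?_ univ_nonempty
    intro θ _
    exact mul_pos (hψpos θ) (Real.rpow_pos_of_pos (by positivity) α)
  set c : ℝ := ψ b0 * q / (ψ b0 * q + K) with hc
  have hcpos : 0 < c := by
    rw [hc]
    apply div_pos (mul_pos (hψpos b0) hqpos)
    nlinarith [mul_pos (hψpos b0) hqpos, hKpos]
  have hbound : ∀ n, c ≤ g (σn n) b0 := by
    intro n
    have hrepn := hrep (σn n) (hσndist n) (hσnfull n) b0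
    have hnb0 : σn n b0 = t n := by rw [hσn]; simp
    set Z : ℝ := ∑ θ', ψ θ' * σn n θ' ^ α with hZ
    have hZpos : 0 < Z := by
      rw [hZ]
      apply Finset.sum_pos ?_ univ_nonempty
      intro θ _
      exact mul_pos (hψpos θ) (Real.rpow_pos_of_pos (hσnfull n θ) α)
    have htpow : q ≤ t n ^ α :=
      Real.rpow_le_rpow_of_nonpos (ht0 n) (ht2 n) hαpos
    have hZle : Z ≤ ψ b0 * t n ^ α + K := by
      rw [hZ, ← Finset.add_sum_erase _ _ (mem_univ b0), hnb0]
      have hKsplit : ∑ θ ∈ univ.erase b0, ψ θ * ((1/2) * m⁻¹) ^ α ≤ K := by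
        rw [hK, ← Finset.add_sum_erase _ (fun θ => ψ θ * ((1/2) * m⁻¹) ^ α)
          (mem_univ b0)]
        nlinarith [mul_pos (hψpos b0) (Real.rpow_pos_of_pos
          (show (0:ℝ) < (1/2) * m⁻¹ by positivity) α)]
      have hterm : ∑ θ ∈ univ.erase b0, ψ θ * σn n θ ^ α ≤
          ∑ θ ∈ univ.erase b0, ψ θ * ((1/2) * m⁻¹) ^ α := by
        apply Finset.sum_le_sum
        intro θ hθ
        have hθne : θ ≠ b0 := Finset.ne_of_mem_erase hθ
        have hval : σn n θ = (1 - t n) * m⁻¹ := by rw [hσn]; simp [hθne]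
        rw [hval]
        apply mul_le_mul_of_nonneg_left ?_ (hψpos θ).le
        apply Real.rpow_le_rpow_of_nonpos (by positivity) ?_ hαpos
        have := ht2 n
        have h12 : (1/2 : ℝ) ≤ 1 - t n := by linarith
        exact mul_le_mul_of_nonneg_right h12 (by positivity)
      linarith
    rw [hrepn, hnb0, hc]
    rw [div_le_div_iff₀ (by nlinarith [mul_pos (hψpos b0) hqpos, hKpos]) hZpos]
    have hψb := hψpos b0
    nlinarith [mul_le_mul_of_nonneg_left hZle (mul_pos hψb hqpos).le,
      mul_le_mul_of_nonneg_right htpow (mul_pos hψb hKpos).le]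
  have : c ≤ g σ0 b0 := ge_of_tendsto' hgtend hbound
  rw [hg0] at this
  linarith
end Core5


section Core6
set_option linter.unusedSectionVars false
variable {Θ : Type*} [Fintype Θ] [DecidableEq Θ]
variable {g : (Θ → ℝ) → Θ → ℝ}
variable (hmapg : ∀ σ, IsDist σ → IsDist (g σ)) (hposg : PositiveBelief g)
variable (hcohg : ∀ σ : Θ → ℝ, IsDist σ → ∀ S : Finset Θ, 0 < ∑ θ ∈ S, σ θ →
    g (condOn σ S) = condOn (g σ) S)

include hmapg hposg hcohg in
lemma rep_all {ψ : Θ → ℝ} {α : ℝ} (hψpos : ∀ θ, 0 < ψ θ) (hα : 0 < α)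
    (hrep : ∀ σ, IsDist σ → (∀ θ, 0 < σ θ) → ∀ θ,
      g σ θ = ψ θ * σ θ ^ α / ∑ θ', ψ θ' * σ θ' ^ α) :
    ∀ σ, IsDist σ → ∀ θ, g σ θ = ψ θ * σ θ ^ α / ∑ θ', ψ θ' * σ θ' ^ α := by
  intro σ hσ
  by_cases hfull : ∀ θ, 0 < σ θ
  · exact hrep σ hσ hfull
  -- support
  set S : Finset Θ := univ.filter (fun θ => σ θ ≠ 0) with hS
  have hmemS : ∀ θ, θ ∈ S ↔ σ θ ≠ 0 := by
    intro θ; rw [hS]; simp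
  have hposS : ∀ θ ∈ S, 0 < σ θ := by
    intro θ hθ
    exact lt_of_le_of_ne (hσ.1 θ) (Ne.symm ((hmemS θ).1 hθ))
  have hzeroNS : ∀ θ, θ ∉ S → σ θ = 0 := by
    intro θ hθ
    by_contra h
    exact hθ ((hmemS θ).2 h)
  have hsumS : ∑ θ ∈ S, σ θ = 1 := by
    rw [hS, Finset.sum_filter_ne_zero]
    exact hσ.2
  -- complement nonempty
  obtain ⟨θ0, hθ0⟩ : ∃ θ0, σ θ0 = 0 := by
    push_neg at hfull
    obtain ⟨θ0, h⟩ := hfull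
    exact ⟨θ0, le_antisymm h (hσ.1 θ0)⟩
  have hθ0S : θ0 ∉ S := by rw [hmemS]; simp [hθ0]
  set k : ℕ := (univ \ S).card with hk
  have hkpos : 0 < k := by
    rw [hk]
    apply Finset.card_pos.2
    exact ⟨θ0, Finset.mem_sdiff.2 ⟨mem_univ _, hθ0S⟩⟩
  have hkR : (0:ℝ) < (k:ℝ) := by exact_mod_cast hkpos
  set σ' : Θ → ℝ := fun θ => if θ ∈ S then σ θ / 2 else (2 * k : ℝ)⁻¹ with hσ'
  have hσ'full : ∀ θ, 0 < σ' θ := by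
    intro θ
    rw [hσ']; dsimp only
    split_ifs with h
    · linarith [hposS θ h]
    · positivity
  have hvalS : ∀ θ ∈ S, σ' θ = σ θ / 2 := by
    intro θ hθ; rw [hσ']; simp [hθ]
  have hvalNS : ∀ θ ∈ univ \ S, σ' θ = (2 * k : ℝ)⁻¹ := by
    intro θ hθ; rw [hσ']; simp [(Finset.mem_sdiff.1 hθ).2]
  have hsumS' : ∑ θ ∈ S, σ' θ = 1/2 := by
    rw [Finset.sum_congr rfl hvalS, ← Finset.sum_div, hsumS]
  have hσ'dist : IsDist σ' := by
    constructor
    · exact fun θ => (hσ'full θ).le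
    · rw [← Finset.sum_filter_add_sum_filter_not univ (fun θ => θ ∈ S)]
      have h1 : univ.filter (fun θ => θ ∈ S) = S := by
        ext θ; simp [hmemS]
      have h2 : univ.filter (fun θ => θ ∉ S) = univ \ S := by
        ext θ; simp
      rw [h1, h2, hsumS']
      have e2 : ∑ θ ∈ univ \ S, σ' θ = 1/2 := by
        rw [Finset.sum_congr rfl hvalNS, Finset.sum_const, ← hk, nsmul_eq_mul]
        field_simp
      rw [e2]; norm_num
  have hcond : condOn σ' S = σ := by
    funext θ
    unfold condOn
    rw [hsumS']
    by_cases h : θ ∈ S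
    · rw [if_pos h, hvalS θ h]
      field_simp
    · rw [if_neg h, hzeroNS θ h]
  have hcoh2 := hcohg σ' hσ'dist S (by rw [hsumS']; norm_num)
  rw [hcond] at hcoh2
  -- sums
  have hSne : S.Nonempty := by
    apply Finset.nonempty_of_sum_ne_zero (f := σ)
    rw [hsumS]; norm_num
  have hZeq : ∑ θ', ψ θ' * σ θ' ^ α = ∑ θ' ∈ S, ψ θ' * σ θ' ^ α := by
    symm
    apply Finset.sum_subset (Finset.subset_univ S)
    intro θ' _ hθ'
    rw [hzeroNS θ' hθ', Real.zero_rpow hα.ne', mul_zero]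
  have hZSpos : 0 < ∑ θ' ∈ S, ψ θ' * σ θ' ^ α := by
    apply Finset.sum_pos ?_ hSne
    intro θ' hθ'
    exact mul_pos (hψpos θ') (Real.rpow_pos_of_pos (hposS θ' hθ') α)
  have hhalfpos : (0:ℝ) < (1/2 : ℝ) ^ α := Real.rpow_pos_of_pos (by norm_num) α
  have hhalf : ∀ θ' ∈ S, ψ θ' * σ' θ' ^ α = (1/2 : ℝ) ^ α * (ψ θ' * σ θ' ^ α) := by
    intro θ' hθ'
    rw [hvalS θ' hθ', div_eq_mul_inv, ← one_div,
      Real.mul_rpow (hσ.1 θ') (by norm_num : (0:ℝ) ≤ 1/2)]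
    ring
  have hSσ' : ∑ θ' ∈ S, ψ θ' * σ' θ' ^ α
      = (1/2 : ℝ) ^ α * ∑ θ' ∈ S, ψ θ' * σ θ' ^ α := by
    rw [Finset.sum_congr rfl hhalf, Finset.mul_sum]
  have hZ'pos : 0 < ∑ θ', ψ θ' * σ' θ' ^ α := by
    apply Finset.sum_pos ?_ ⟨θ0, mem_univ θ0⟩
    intro θ' _
    exact mul_pos (hψpos θ') (Real.rpow_pos_of_pos (hσ'full θ') α)
  have hgσ' := hrep σ' hσ'dist hσ'full
  have hGS : ∑ θ' ∈ S, g σ' θ' = (∑ θ' ∈ S, ψ θ' * σ' θ' ^ α)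
      / ∑ θ'', ψ θ'' * σ' θ'' ^ α := by
    rw [Finset.sum_congr rfl (fun θ' _ => hgσ' θ'), Finset.sum_div]
  intro θ
  rw [hcoh2]
  unfold condOn
  by_cases h : θ ∈ S
  · rw [if_pos h, hGS, hgσ' θ, hSσ', hZeq, hhalf θ h,
      div_div_div_cancel_right₀ hZ'pos.ne', mul_div_mul_left _ _ hhalfpos.ne']
  · rw [if_neg h, hzeroNS θ h, Real.zero_rpow hα.ne', mul_zero, zero_div]

end Core6


section Core7
set_option linter.unusedSectionVars false
variable {Θ : Type*} [Fintype Θ] [DecidableEq Θ]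
variable {g : (Θ → ℝ) → Θ → ℝ}

lemma converse_coherent {ψ : Θ → ℝ} {α : ℝ} (hψpos : ∀ θ, 0 < ψ θ) (hα : 0 < α)
    (hform : ∀ σ, IsDist σ → ∀ θ, g σ θ = ψ θ * σ θ ^ α / ∑ θ', ψ θ' * σ θ' ^ α)
    {σ : Θ → ℝ} (hσ : IsDist σ) {S : Finset Θ} (hS : 0 < ∑ θ ∈ S, σ θ) :
    g (condOn σ S) = condOn (g σ) S := by
  set m : ℝ := ∑ θ ∈ S, σ θ with hm
  obtain ⟨θs, hθsS, hθs⟩ : ∃ θ ∈ S, 0 < σ θ := by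
    by_contra h
    push_neg at h
    have : ∑ θ ∈ S, σ θ = 0 :=
      Finset.sum_eq_zero fun θ hθ => le_antisymm (h θ hθ) (hσ.1 θ)
    rw [← hm] at this
    linarith
  have hcd : IsDist (condOn σ S) := by
    constructor
    · intro θ
      unfold condOn
      split_ifs with h
      · exact div_nonneg (hσ.1 θ) hS.le
      · exact le_refl 0
    · unfold condOn
      rw [Finset.sum_ite_mem, Finset.univ_inter, ← Finset.sum_div, ← hm,
        div_self hS.ne']
  set ZS : ℝ := ∑ θ ∈ S, ψ θ * σ θ ^ α with hZS
  have hZSpos : 0 < ZS := by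
    rw [hZS]
    apply Finset.sum_pos' ?_ ⟨θs, hθsS, mul_pos (hψpos θs)
      (Real.rpow_pos_of_pos hθs α)⟩
    intro θ _
    exact mul_nonneg (hψpos θ).le (Real.rpow_nonneg (hσ.1 θ) _)
  set Z : ℝ := ∑ θ', ψ θ' * σ θ' ^ α with hZ
  have hZpos : 0 < Z := by
    rw [hZ]
    apply Finset.sum_pos' ?_ ⟨θs, mem_univ θs, mul_pos (hψpos θs)
      (Real.rpow_pos_of_pos hθs α)⟩
    intro θ _
    exact mul_nonneg (hψpos θ).le (Real.rpow_nonneg (hσ.1 θ) _)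
  have hmpow : (0:ℝ) < m ^ α := Real.rpow_pos_of_pos hS α
  have hterm : ∀ θ', ψ θ' * condOn σ S θ' ^ α =
      if θ' ∈ S then ψ θ' * σ θ' ^ α / m ^ α else 0 := by
    intro θ'
    unfold condOn
    split_ifs with h
    · rw [← hm, Real.div_rpow (hσ.1 θ') hS.le, mul_div_assoc]
    · rw [Real.zero_rpow hα.ne', mul_zero]
  have hZc : ∑ θ', ψ θ' * condOn σ S θ' ^ α = ZS / m ^ α := by
    rw [Finset.sum_congr rfl (fun θ' _ => hterm θ'), Finset.sum_ite_mem,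
      Finset.univ_inter, ← Finset.sum_div, hZS]
  have hsumgS : ∑ θ' ∈ S, g σ θ' = ZS / Z := by
    rw [Finset.sum_congr rfl (fun θ' _ => hform σ hσ θ'), ← hZ, ← Finset.sum_div,
      hZS]
  funext θ
  rw [hform (condOn σ S) hcd θ, hZc]
  unfold condOn
  by_cases h : θ ∈ S
  · rw [if_pos h, if_pos h, ← hm, hsumgS, hform σ hσ θ, ← hZ,
      Real.div_rpow (hσ.1 θ) hS.le, mul_div_assoc,
      div_div_div_cancel_right₀ hmpow.ne', div_div_div_cancel_right₀ hZpos.ne',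
      mul_div_assoc]
  · rw [if_neg h, if_neg h, Real.zero_rpow hα.ne', mul_zero, zero_div]

end Core7


/-- **Corollary (Blackwell signal coherence)**: for `|Θ| ≥ 3`, a positive and continuous
Blackwell distortion function `{g_ω}` is Blackwell signal coherent iff each `g_ω` has a
power-weighted distorted belief representation. -/
theorem stmt5 {Ω Θ : Type*} [Fintype Ω] [Fintype Θ] [DecidableEq Θ]
    (hΘ : 3 ≤ Fintype.card Θ)
    (g : Ω → (Θ → ℝ) → Θ → ℝ)
    (hmap : ∀ (ω : Ω) σ, IsDist σ → IsDist (g ω σ))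
    (hpos : ∀ ω : Ω, PositiveBelief (g ω))
    (hcont : ∀ ω : Ω, ContinuousOn (g ω) {σ | IsDist σ}) :
    BlackwellSignalCoherent g ↔
      ∀ ω : Ω, ∃ (ψ : Θ → ℝ) (α : ℝ), (∀ θ, 0 < ψ θ) ∧ 0 < α ∧
        ∀ σ, IsDist σ → ∀ θ,
          g ω σ θ = ψ θ * σ θ ^ α / ∑ θ', ψ θ' * σ θ' ^ α := by
  constructor
  · intro hcoh ω
    have hcohg : ∀ σ : Θ → ℝ, IsDist σ → ∀ S : Finset Θ, 0 < ∑ θ ∈ S, σ θ →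
        g ω (condOn σ S) = condOn (g ω σ) S := fun σ hσ S hS => hcoh ω σ hσ S hS
    obtain ⟨ψ, α, hψ, hrepfull⟩ :=
      rep_full_exists (hmap ω) (hpos ω) hcohg (hcont ω) hΘ
    have hα := alpha_pos (hmap ω) (hpos ω) (hcont ω) hΘ hψ hrepfull
    exact ⟨ψ, α, hψ, hα, rep_all (hmap ω) (hpos ω) hcohg hψ hα hrepfull⟩
  · intro h ω σ hσ S hS
    obtain ⟨ψ, α, hψ, hα, hform⟩ := h ω
    exact converse_coherent hψ hα (fun σ' hσ' => hform σ' hσ') hσ hS
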